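/- Let Ṽ = (I_{pm} ⊗ Λ_{K-1})(I_{pm} ⊗ V_{K-1})Λ, where Λ_{K-1} = diag(1,2,…,K−1), V_{K-1} is the (K−1)×n Vandermonde matrix with columns (1, λⱼ, …, λⱼ^{K-2})ᵀ, and Λ is the stacked (pm·n)×n matrix of diagonal matrices Λ_{ij} = diag(c_{i1}b_{1j}, …, c_{in}b_{nj}). Then σ_min(Ṽ)² ≤ K² · ‖Λ‖² · λ_{⌊n/(pm)⌋}(V_{K-1} V_{K-1}ᵀ). -/

import Mathlib

/-!
Write `k = ⌊n/(pm)⌋ - 1`, `μ` for the `(k+1)`-st largest eigenvalue of `V Vᵀ` and `u_a` for the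
`a`-th block of `Λ x`. The `pm · k < n` linear conditions "`V u_a` is orthogonal to the `k`
leading eigenvectors of `V Vᵀ`" have a nonzero solution `x`. For it, `z = V u_a` satisfies
`zᵀ (V Vᵀ) z ≤ μ ‖z‖²`, and Cauchy–Schwarz `‖z‖⁴ = ⟨u_a, Vᵀ z⟩² ≤ ‖u_a‖² zᵀ (V Vᵀ) z` upgrades
this to `‖V u_a‖² ≤ μ ‖u_a‖²`. Since `diag(1, …, K-1) ≤ K`, summing over the blocks gives
`‖Ṽ x‖² ≤ K² μ ‖Λ x‖² ≤ K² μ ‖Λ‖² ‖x‖²`, and the Rayleigh quotient at `x` bounds `λ_min(ṼᵀṼ)`.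
-/

open Matrix MeasureTheory
open scoped BigOperators Kronecker

noncomputable def specNorm {α β : Type*} [Fintype α] [Fintype β] [DecidableEq β]
    (M : Matrix α β ℝ) : ℝ :=
  ‖LinearMap.toContinuousLinearMap (Matrix.toEuclideanLin M)‖

def frobSq {α β : Type*} [Fintype α] [Fintype β] (M : Matrix α β ℝ) : ℝ :=
  ∑ i, ∑ j, (M i j) ^ 2

noncomputable def lambdaMin {β : Type*} [Fintype β] (M : Matrix β β ℝ) : ℝ :=
  ⨅ x : {x : β → ℝ // ∑ i, (x i) ^ 2 = 1}, x.1 ⬝ᵥ (M *ᵥ x.1)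

noncomputable def lambdaMax {β : Type*} [Fintype β] (M : Matrix β β ℝ) : ℝ :=
  ⨆ x : {x : β → ℝ // ∑ i, (x i) ^ 2 = 1}, x.1 ⬝ᵥ (M *ᵥ x.1)

noncomputable def svals {α : Type*} [Fintype α] {N : ℕ} (M : Matrix α (Fin N) ℝ) : Fin N → ℝ :=
  fun j => Real.sqrt ((show (Mᵀ * M).IsHermitian by simpa using Matrix.isHermitian_conjTranspose_mul_self M).eigenvalues j)

noncomputable def sigmaDesc {α : Type*} [Fintype α] {N : ℕ} (M : Matrix α (Fin N) ℝ) (k : Fin N) : ℝ :=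
  (svals M ∘ Tuple.sort (svals M)) k.rev

noncomputable def eigDesc {N : ℕ} {M : Matrix (Fin N) (Fin N) ℝ} (hM : M.IsHermitian) (k : Fin N) : ℝ :=
  (hM.eigenvalues ∘ Tuple.sort hM.eigenvalues) k.rev

lemma dotProduct_self_nonneg {ι : Type*} [Fintype ι] (v : ι → ℝ) : 0 ≤ v ⬝ᵥ v :=
  Finset.sum_nonneg fun _ _ => mul_self_nonneg _

lemma dotProduct_sq_le {ι : Type*} [Fintype ι] (x y : ι → ℝ) :
    (x ⬝ᵥ y) ^ 2 ≤ (x ⬝ᵥ x) * (y ⬝ᵥ y) := by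
  simpa only [dotProduct, sq] using Finset.sum_mul_sq_le_sq_mul_sq Finset.univ x y

lemma dotProduct_self_eq_sum_curry {α β : Type*} [Fintype α] [Fintype β] (w : α × β → ℝ) :
    w ⬝ᵥ w = ∑ a, Function.curry w a ⬝ᵥ Function.curry w a := by
  simp only [dotProduct, Fintype.sum_prod_type, Function.curry_apply]

lemma curry_one_kronecker_mulVec {α β γ : Type*} [Fintype α] [DecidableEq α] [Fintype γ]
    (M : Matrix β γ ℝ) (w : α × γ → ℝ) (a : α) :
    Function.curry (((1 : Matrix α α ℝ) ⊗ₖ M) *ᵥ w) a = M *ᵥ Function.curry w a := by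
  ext t
  simp [mulVec, dotProduct, Fintype.sum_prod_type, one_apply, ite_mul]

lemma dotProduct_self_diagonal_mulVec_le {ι : Type*} [Fintype ι] [DecidableEq ι] {d : ι → ℝ}
    {C : ℝ} (hd : ∀ i, |d i| ≤ C) (z : ι → ℝ) :
    (diagonal d *ᵥ z) ⬝ᵥ (diagonal d *ᵥ z) ≤ C ^ 2 * (z ⬝ᵥ z) := by
  simp only [mulVec_diagonal, dotProduct, Finset.mul_sum]
  refine Finset.sum_le_sum fun i _ => ?_
  have := sq_le_sq' (abs_le.1 (hd i)).1 (abs_le.1 (hd i)).2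
  nlinarith [mul_le_mul_of_nonneg_right this (mul_self_nonneg (z i))]

lemma norm_toLp_sq {ι : Type*} [Fintype ι] (v : ι → ℝ) : ‖WithLp.toLp 2 v‖ ^ 2 = v ⬝ᵥ v := by
  rw [EuclideanSpace.norm_sq_eq]
  simp [dotProduct, sq]

lemma dotProduct_self_mulVec_le_specNorm {ι κ : Type*} [Fintype ι] [Fintype κ] [DecidableEq κ]
    (M : Matrix ι κ ℝ) (x : κ → ℝ) :
    (M *ᵥ x) ⬝ᵥ (M *ᵥ x) ≤ specNorm M ^ 2 * (x ⬝ᵥ x) := by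
  have h := (LinearMap.toContinuousLinearMap (toEuclideanLin M)).le_opNorm (WithLp.toLp 2 x)
  rw [← norm_toLp_sq, ← norm_toLp_sq, ← mul_pow]
  exact pow_le_pow_left₀ (norm_nonneg _) (by simpa [specNorm] using h) 2

lemma Matrix.exists_mulVec_eq_zero_of_card_lt {ι κ : Type*} [Fintype ι] [Fintype κ]
    (M : Matrix ι κ ℝ) (h : Fintype.card ι < Fintype.card κ) : ∃ x ≠ 0, M *ᵥ x = 0 := by
  have hker := LinearMap.ker_ne_bot_of_finrank_lt (f := M.mulVecLin) (by simpa using h)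
  obtain ⟨x, hx, hx0⟩ := (Submodule.ne_bot_iff _).1 hker
  exact ⟨x, hx0, hx⟩

section RayleighQuotient

variable {ι κ : Type*} [Fintype ι] [Fintype κ]

lemma lambdaMin_of_isEmpty [IsEmpty ι] (M : Matrix ι ι ℝ) : lambdaMin M = 0 := by
  have : IsEmpty {x : ι → ℝ // ∑ i, x i ^ 2 = 1} := ⟨fun ⟨x, hx⟩ => by simp at hx⟩
  exact Real.iInf_of_isEmpty _

lemma lambdaMin_transpose_mul_self_le (B : Matrix κ ι ℝ) {C : ℝ} {x : ι → ℝ} (hx : x ≠ 0)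
    (h : (B *ᵥ x) ⬝ᵥ (B *ᵥ x) ≤ C * (x ⬝ᵥ x)) : lambdaMin (Bᵀ * B) ≤ C := by
  have quad : ∀ u, u ⬝ᵥ ((Bᵀ * B) *ᵥ u) = (B *ᵥ u) ⬝ᵥ (B *ᵥ u) := fun u => by
    rw [← mulVec_mulVec, dotProduct_mulVec, vecMul_transpose]
  have hxx : 0 < x ⬝ᵥ x :=
    (dotProduct_self_nonneg x).lt_of_ne' (dotProduct_self_eq_zero.not.mpr hx)
  set r := √(x ⬝ᵥ x)
  have hr : r ^ 2 = x ⬝ᵥ x := Real.sq_sqrt hxx.le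
  have hr0 : r ≠ 0 := (Real.sqrt_pos.2 hxx).ne'
  have hunit : ∑ i, (r⁻¹ • x) i ^ 2 = 1 := by
    have hsq : ∑ i, x i ^ 2 = x ⬝ᵥ x := Finset.sum_congr rfl fun i _ => sq (x i)
    simp only [Pi.smul_apply, smul_eq_mul, mul_pow, ← Finset.mul_sum, hsq, ← hr]
    field_simp
  have hbdd : BddBelow (Set.range fun u : {u : ι → ℝ // ∑ i, u i ^ 2 = 1} =>
      u.1 ⬝ᵥ ((Bᵀ * B) *ᵥ u.1)) := by
    refine ⟨0, Set.forall_mem_range.2 fun u => ?_⟩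
    exact (dotProduct_self_nonneg _).trans (quad u.1).ge
  calc lambdaMin (Bᵀ * B) ≤ (r⁻¹ • x) ⬝ᵥ ((Bᵀ * B) *ᵥ (r⁻¹ • x)) := ciInf_le hbdd ⟨_, hunit⟩
    _ = (B *ᵥ x) ⬝ᵥ (B *ᵥ x) / x ⬝ᵥ x := by
      rw [quad, mulVec_smul, smul_dotProduct, dotProduct_smul, smul_eq_mul, smul_eq_mul, ← hr]
      field_simp
    _ ≤ C := (div_le_iff₀ hxx).2 h

end RayleighQuotient

lemma Matrix.IsHermitian.dotProduct_mulVec_le {ι : Type*} [Fintype ι] [DecidableEq ι]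
    {A : Matrix ι ι ℝ} (hA : A.IsHermitian) {z : ι → ℝ} {μ : ℝ}
    (h : ∀ i, hA.eigenvalues i ≤ μ ∨ ⇑(hA.eigenvectorBasis i) ⬝ᵥ z = 0) :
    z ⬝ᵥ (A *ᵥ z) ≤ μ * (z ⬝ᵥ z) := by
  set U : Matrix ι ι ℝ := ↑hA.eigenvectorUnitary
  set w := star U *ᵥ z with hw_def
  have hw : ∀ i, w i = ⇑(hA.eigenvectorBasis i) ⬝ᵥ z := fun i => by
    simp [w, U, mulVec, dotProduct]
  have hshift : ∀ v, z ⬝ᵥ (U *ᵥ v) = w ⬝ᵥ v := fun v => by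
    rw [dotProduct_mulVec, ← mulVec_transpose, hw_def, star_eq_conjTranspose,
      conjTranspose_eq_transpose_of_trivial]
  have hA_eq : A *ᵥ z = U *ᵥ (diagonal hA.eigenvalues *ᵥ w) := by
    conv_lhs => rw [hA.spectral_theorem, Unitary.conjStarAlgAut_apply]
    simp [U, w, mulVec_mulVec, Matrix.mul_assoc]
  have hz : U *ᵥ w = z := by
    rw [hw_def, mulVec_mulVec, Unitary.mul_star_self_of_mem hA.eigenvectorUnitary.2, one_mulVec]
  have hzz : z ⬝ᵥ z = w ⬝ᵥ w := by
    conv_lhs => arg 2; rw [← hz]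
    exact hshift w
  calc z ⬝ᵥ (A *ᵥ z) = ∑ i, hA.eigenvalues i * w i ^ 2 := by
        rw [hA_eq, hshift, dotProduct]
        exact Finset.sum_congr rfl fun i _ => by rw [mulVec_diagonal]; ring
    _ ≤ ∑ i, μ * w i ^ 2 := Finset.sum_le_sum fun i _ => (h i).elim
        (mul_le_mul_of_nonneg_right · (sq_nonneg _)) fun h0 => by simp [hw, h0]
    _ = μ * (z ⬝ᵥ z) := by rw [hzz, dotProduct, Finset.mul_sum]; simp only [sq]

section LeadingEigenvectors

variable {N : ℕ} {A : Matrix (Fin N) (Fin N) ℝ}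

lemma eigDesc_antitone (hA : A.IsHermitian) : Antitone (eigDesc hA) := fun _ _ hij =>
  Tuple.monotone_sort _ (Fin.rev_le_rev.2 hij)

lemma eigDesc_nonneg (hA : A.PosSemidef) (k : Fin N) : 0 ≤ eigDesc hA.1 k :=
  hA.eigenvalues_nonneg _

/-- The rows are eigenvectors for the eigenvalues `eigDesc hA j`, `j < k`. -/
noncomputable def leadingEigenvectors (hA : A.IsHermitian) (k : Fin N) :
    Matrix (Finset.Iio k) (Fin N) ℝ :=
  fun j => hA.eigenvectorBasis (Tuple.sort hA.eigenvalues (j : Fin N).rev)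

lemma Matrix.IsHermitian.dotProduct_mulVec_le_eigDesc (hA : A.IsHermitian) (k : Fin N)
    {z : Fin N → ℝ} (hz : leadingEigenvectors hA k *ᵥ z = 0) :
    z ⬝ᵥ (A *ᵥ z) ≤ eigDesc hA k * (z ⬝ᵥ z) := by
  refine hA.dotProduct_mulVec_le fun i => ?_
  set σ := Tuple.sort hA.eigenvalues
  set j := (σ.symm i).rev
  have hi : σ j.rev = i := by simp [j]
  rw [← hi]
  by_cases hjk : j < k
  · exact .inr (congrFun hz ⟨j, Finset.mem_Iio.2 hjk⟩)
  · exact .inl (eigDesc_antitone hA (not_lt.1 hjk))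

end LeadingEigenvectors

lemma dotProduct_self_mulVec_le_of_gram {κ ν : Type*} [Fintype κ] [Fintype ν]
    (B : Matrix κ ν ℝ) (y : ν → ℝ) {μ : ℝ} (hμ : 0 ≤ μ)
    (h : (B *ᵥ y) ⬝ᵥ ((B * Bᴴ) *ᵥ (B *ᵥ y)) ≤ μ * ((B *ᵥ y) ⬝ᵥ (B *ᵥ y))) :
    (B *ᵥ y) ⬝ᵥ (B *ᵥ y) ≤ μ * (y ⬝ᵥ y) := by
  set z := B *ᵥ y
  have hgram : (Bᵀ *ᵥ z) ⬝ᵥ (Bᵀ *ᵥ z) = z ⬝ᵥ ((B * Bᴴ) *ᵥ z) := by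
    rw [conjTranspose_eq_transpose_of_trivial, ← mulVec_mulVec, dotProduct_mulVec,
      vecMul_transpose, dotProduct_comm]
  have hcs : (z ⬝ᵥ z) ^ 2 ≤ (y ⬝ᵥ y) * (z ⬝ᵥ ((B * Bᴴ) *ᵥ z)) := by
    rw [← hgram]
    calc (z ⬝ᵥ z) ^ 2 = (y ⬝ᵥ (Bᵀ *ᵥ z)) ^ 2 := by
          rw [mulVec_transpose, dotProduct_comm y, ← dotProduct_mulVec]
      _ ≤ (y ⬝ᵥ y) * ((Bᵀ *ᵥ z) ⬝ᵥ (Bᵀ *ᵥ z)) := dotProduct_sq_le _ _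
  have hy := dotProduct_self_nonneg y
  rcases (dotProduct_self_nonneg z).eq_or_lt with hz | hz
  · rw [← hz]
    exact mul_nonneg hμ hy
  · refine le_of_mul_le_mul_right ?_ hz
    nlinarith [mul_le_mul_of_nonneg_left h hy]

lemma dotProduct_self_mulVec_le_eigDesc {N : ℕ} {ν : Type*} [Fintype ν]
    (B : Matrix (Fin N) ν ℝ) (k : Fin N) {y : ν → ℝ}
    (hy : leadingEigenvectors (isHermitian_mul_conjTranspose_self B) k *ᵥ (B *ᵥ y) = 0) :
    (B *ᵥ y) ⬝ᵥ (B *ᵥ y) ≤ eigDesc (isHermitian_mul_conjTranspose_self B) k * (y ⬝ᵥ y) :=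
  dotProduct_self_mulVec_le_of_gram B y (eigDesc_nonneg (posSemidef_self_mul_conjTranspose B) k)
    ((isHermitian_mul_conjTranspose_self B).dotProduct_mulVec_le_eigDesc k hy)

lemma dotProduct_self_kronecker_mulVec_le_eigDesc {α ν : Type*} [Fintype α] [DecidableEq α]
    [Fintype ν] {N : ℕ} (B : Matrix (Fin N) ν ℝ) (k : Fin N) {d : Fin N → ℝ} {C : ℝ}
    (hd : ∀ t, |d t| ≤ C) {w : α × ν → ℝ}
    (hw : ((1 : Matrix α α ℝ) ⊗ₖ
      (leadingEigenvectors (isHermitian_mul_conjTranspose_self B) k * B)) *ᵥ w = 0) :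
    (((1 : Matrix α α ℝ) ⊗ₖ diagonal d) *ᵥ (((1 : Matrix α α ℝ) ⊗ₖ B) *ᵥ w)) ⬝ᵥ
        (((1 : Matrix α α ℝ) ⊗ₖ diagonal d) *ᵥ (((1 : Matrix α α ℝ) ⊗ₖ B) *ᵥ w)) ≤
      C ^ 2 * eigDesc (isHermitian_mul_conjTranspose_self B) k * (w ⬝ᵥ w) := by
  rw [dotProduct_self_eq_sum_curry, dotProduct_self_eq_sum_curry w, Finset.mul_sum]
  refine Finset.sum_le_sum fun a _ => ?_
  have hblock : leadingEigenvectors (isHermitian_mul_conjTranspose_self B) k *ᵥ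
      (B *ᵥ Function.curry w a) = 0 := by
    rw [mulVec_mulVec, ← curry_one_kronecker_mulVec, hw]
    rfl
  simp only [curry_one_kronecker_mulVec]
  calc _ ≤ C ^ 2 * ((B *ᵥ Function.curry w a) ⬝ᵥ (B *ᵥ Function.curry w a)) :=
        dotProduct_self_diagonal_mulVec_le hd _
    _ ≤ C ^ 2 * (eigDesc (isHermitian_mul_conjTranspose_self B) k *
          (Function.curry w a ⬝ᵥ Function.curry w a)) :=
        mul_le_mul_of_nonneg_left (dotProduct_self_mulVec_le_eigDesc B k hblock) (sq_nonneg _)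
    _ = _ := (mul_assoc _ _ _).symm

lemma mul_sub_one_div_lt {n : ℕ} (hn : 0 < n) (m p : ℕ) : m * p * (n / (p * m) - 1) < n := by
  rw [Nat.mul_comm m p, Nat.mul_sub_one]
  have := Nat.mul_div_le n (p * m)
  rcases Nat.eq_zero_or_pos (p * m) with h | h
  · simpa [h] using hn
  · omega

theorem stmt8_general (p m K n : ℕ)
    (VK : Matrix (Fin (K - 1)) (Fin n) ℝ)
    (Λdiag : Matrix (Fin (K - 1)) (Fin (K - 1)) ℝ)
    (hΛdiag : Λdiag = Matrix.diagonal (fun t : Fin (K - 1) => (t : ℝ) + 1))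
    (Λ : Matrix ((Fin m × Fin p) × Fin n) (Fin n) ℝ)
    (Vt : Matrix ((Fin m × Fin p) × Fin (K - 1)) (Fin n) ℝ)
    (hVt : Vt = ((1 : Matrix (Fin m × Fin p) (Fin m × Fin p) ℝ) ⊗ₖ Λdiag) *
      (((1 : Matrix (Fin m × Fin p) (Fin m × Fin p) ℝ) ⊗ₖ VK) * Λ))
    (hidx : n / (p * m) - 1 < K - 1) :
    lambdaMin (Vtᵀ * Vt) ≤ (K : ℝ) ^ 2 * specNorm Λ ^ 2 *
      eigDesc (Matrix.isHermitian_mul_conjTranspose_self VK) ⟨n / (p * m) - 1, hidx⟩ := by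
  set k : Fin (K - 1) := ⟨n / (p * m) - 1, hidx⟩
  set μ := eigDesc (isHermitian_mul_conjTranspose_self VK) k
  have hμ : 0 ≤ μ := eigDesc_nonneg (posSemidef_self_mul_conjTranspose VK) k
  rcases Nat.eq_zero_or_pos n with rfl | hn
  · rw [lambdaMin_of_isEmpty]
    positivity
  obtain ⟨x, hx0, hx⟩ := (((1 : Matrix (Fin m × Fin p) (Fin m × Fin p) ℝ) ⊗ₖ
      (leadingEigenvectors (isHermitian_mul_conjTranspose_self VK) k * VK)) *
    Λ).exists_mulVec_eq_zero_of_card_lt (by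
      simpa only [Fintype.card_prod, Fintype.card_fin, Fintype.card_coe, Fin.card_Iio]
        using mul_sub_one_div_lt hn m p)
  have hdiag : ∀ t : Fin (K - 1), |(t : ℝ) + 1| ≤ K := fun t => by
    rw [abs_of_nonneg (by positivity)]
    exact_mod_cast Nat.add_one_le_of_lt (Nat.lt_of_lt_of_le t.2 (Nat.sub_le K 1))
  refine lambdaMin_transpose_mul_self_le Vt hx0 ?_
  calc (Vt *ᵥ x) ⬝ᵥ (Vt *ᵥ x) ≤ (K : ℝ) ^ 2 * μ * ((Λ *ᵥ x) ⬝ᵥ (Λ *ᵥ x)) := by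
        rw [hVt, hΛdiag, ← mulVec_mulVec, ← mulVec_mulVec]
        exact dotProduct_self_kronecker_mulVec_le_eigDesc VK k hdiag (by rwa [mulVec_mulVec])
    _ ≤ (K : ℝ) ^ 2 * μ * (specNorm Λ ^ 2 * (x ⬝ᵥ x)) :=
        mul_le_mul_of_nonneg_left (dotProduct_self_mulVec_le_specNorm Λ x) (by positivity)
    _ = (K : ℝ) ^ 2 * specNorm Λ ^ 2 * μ * (x ⬝ᵥ x) := by ring

/-- bound `σ_min(Ṽ)² ≤ K²‖Λ‖²λ_{⌊n/(pm)⌋}(V_{K-1}V_{K-1}ᵀ)` for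
`Ṽ = (I ⊗ Λ_{K-1})(I ⊗ V_{K-1})Λ`. -/
theorem stmt8 (p m K n : ℕ) (hK : 1 ≤ K)
    (lam : Fin n → ℝ) (b : Fin n → Fin p → ℝ) (c : Fin m → Fin n → ℝ)
    (VK : Matrix (Fin (K - 1)) (Fin n) ℝ)
    (hVK : ∀ (t : Fin (K - 1)) (j : Fin n), VK t j = lam j ^ (t : ℕ))
    (Λdiag : Matrix (Fin (K - 1)) (Fin (K - 1)) ℝ)
    (hΛdiag : Λdiag = Matrix.diagonal (fun t : Fin (K - 1) => (t : ℝ) + 1))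
    (Λ : Matrix ((Fin m × Fin p) × Fin n) (Fin n) ℝ)
    (hΛ : ∀ (i : Fin m) (j : Fin p) (k k' : Fin n),
      Λ ((i, j), k) k' = if k = k' then c i k * b k j else 0)
    (Vt : Matrix ((Fin m × Fin p) × Fin (K - 1)) (Fin n) ℝ)
    (hVt : Vt = ((1 : Matrix (Fin m × Fin p) (Fin m × Fin p) ℝ) ⊗ₖ Λdiag) *
      (((1 : Matrix (Fin m × Fin p) (Fin m × Fin p) ℝ) ⊗ₖ VK) * Λ))
    (hrank : Vt.rank = n)
    (hidx : n / (p * m) - 1 < K - 1) :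
    lambdaMin (Vtᵀ * Vt) ≤ (K : ℝ) ^ 2 * specNorm Λ ^ 2 *
      eigDesc (Matrix.isHermitian_mul_conjTranspose_self VK) ⟨n / (p * m) - 1, hidx⟩ :=
  stmt8_general p m K n VK Λdiag hΛdiag Λ Vt hVt hidx
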